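/- arXiv:2501.10038 — 3 statements merged into one kernel-verified Lean document; each statement's English description precedes it below -/
import Mathlib

section
/- Suppose p : ℝ × ℝ^d × (0,T] → ℝ≥0 satisfies the Gaussian bound p(m, x; t, x₀) ≤ C_T φ_{d+1}(m - x₀¹, m - x¹, x̃ - x̃₀; 2t) · 1_{m > max(x¹, x₀¹)}, and let f₀ ∈ L¹ ∩ L²(ℝ^d) be a probability density. Define p_V(m,x;t) = ∫ p(m,x;t,x₀) f₀(x₀) dx₀. Then sup_{t ∈ (0,T]} ∫_{ℝ^d} ( ∫_{m ≥ x¹} p_V(m, x; t) dm )² dx ≤ C_T² ‖f₀‖²_{L²} (up to a universal multiplicative constant depending on d). -/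
open MeasureTheory

/-- The one-dimensional centered Gaussian density with variance `t`. -/
noncomputable def gaussPhi1 (u t : ℝ) : ℝ :=
  (2 * Real.pi * t) ^ (-(1 : ℝ) / 2) * Real.exp (-u ^ 2 / (2 * t))

/-- The centered Gaussian density on `ℝ^e` with covariance `t·I`. -/
noncomputable def gaussPhi (e : ℕ) (z : EuclideanSpace ℝ (Fin e)) (t : ℝ) : ℝ :=
  (2 * Real.pi * t) ^ (-(e : ℝ) / 2) * Real.exp (-‖z‖ ^ 2 / (2 * t))

/-!
Dropping the indicator, the Gaussian bound dominates `∫_{m ≥ x¹} p_V(m, x; t) dm` by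
`C_T ∫ k(x, x₀) f₀(x₀) dx₀`, where
`k(x, x₀) = (∫ φ₁(m - x¹) φ₁(m - x₀¹) dm) · φ_{d-1}(x̃ - x̃₀)` (variances `2t`).
Every row and every column of `k` integrates to `1`, so by Schur's test (Cauchy–Schwarz against
`k`, then Tonelli) the integral operator with kernel `k` has norm at most `1` on `L²`; the bound
holds with the constant `1`. The estimates are carried out in `ℝ≥0∞`, so that no measurability or
integrability of `p` is needed.
-/

open ENNReal Real Function ProbabilityTheory

section SchurTest

variable {α β : Type*} [MeasurableSpace α] [MeasurableSpace β] {μ : Measure α} {ν : Measure β}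

lemma ofReal_integral_le_lintegral_ofReal {f : α → ℝ} (hf : ∀ x, 0 ≤ f x) :
    ENNReal.ofReal (∫ x, f x ∂μ) ≤ ∫⁻ x, ENNReal.ofReal (f x) ∂μ :=
  calc ENNReal.ofReal (∫ x, f x ∂μ) ≤ ‖∫ x, f x ∂μ‖ₑ := Real.ofReal_le_enorm _
    _ ≤ ∫⁻ x, ‖f x‖ₑ ∂μ := enorm_integral_le_lintegral_enorm f
    _ = ∫⁻ x, ENNReal.ofReal (f x) ∂μ := by simp_rw [Real.enorm_of_nonneg (hf _)]

lemma sq_lintegral_mul_le {g f : α → ℝ≥0∞} (hg : AEMeasurable g μ) (hf : AEMeasurable f μ) :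
    (∫⁻ x, g x * f x ∂μ) ^ 2 ≤ (∫⁻ x, g x ∂μ) * ∫⁻ x, g x * f x ^ 2 ∂μ := by
  have key := ENNReal.lintegral_mul_norm_pow_le (g := fun x => g x * f x ^ 2) hg
    (hg.mul (hf.pow_const 2))
    (by norm_num : (0 : ℝ) ≤ 1 / 2) (by norm_num : (0 : ℝ) ≤ 1 / 2) (by norm_num)
  have hsq : ∀ a : ℝ≥0∞, (a ^ (1 / 2 : ℝ)) ^ 2 = a := fun a => by
    rw [← ENNReal.rpow_natCast, ← ENNReal.rpow_mul]; norm_num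
  have hintegrand : ∀ x, g x ^ (1 / 2 : ℝ) * (g x * f x ^ 2) ^ (1 / 2 : ℝ) = g x * f x := by
    intro x
    rw [ENNReal.mul_rpow_of_nonneg _ _ (by norm_num), ← mul_assoc,
      ← ENNReal.rpow_add_of_nonneg _ _ (by norm_num) (by norm_num), ← ENNReal.rpow_natCast,
      ← ENNReal.rpow_mul]
    norm_num
  simp_rw [hintegrand] at key
  calc (∫⁻ x, g x * f x ∂μ) ^ 2
      ≤ ((∫⁻ x, g x ∂μ) ^ (1 / 2 : ℝ) * (∫⁻ x, g x * f x ^ 2 ∂μ) ^ (1 / 2 : ℝ)) ^ 2 := by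
        gcongr
    _ = (∫⁻ x, g x ∂μ) * ∫⁻ x, g x * f x ^ 2 ∂μ := by rw [mul_pow, hsq, hsq]

/-- Schur's test for an integral operator on `L²`. -/
lemma lintegral_sq_lintegral_mul_le [SFinite μ] [SFinite ν] {K : α → β → ℝ≥0∞}
    (hK : Measurable (uncurry K)) {f : β → ℝ≥0∞} (hf : AEMeasurable f ν) {a b : ℝ≥0∞}
    (ha : ∀ x, ∫⁻ y, K x y ∂ν ≤ a) (hb : ∀ y, ∫⁻ x, K x y ∂μ ≤ b) :
    ∫⁻ x, (∫⁻ y, K x y * f y ∂ν) ^ 2 ∂μ ≤ a * b * ∫⁻ y, f y ^ 2 ∂ν := by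
  have hKf : AEMeasurable (uncurry fun x y => K x y * f y ^ 2) (μ.prod ν) :=
    hK.aemeasurable.mul ((hf.pow_const 2).comp_snd)
  calc ∫⁻ x, (∫⁻ y, K x y * f y ∂ν) ^ 2 ∂μ
      ≤ ∫⁻ x, a * ∫⁻ y, K x y * f y ^ 2 ∂ν ∂μ := by
        refine lintegral_mono fun x => ?_
        exact (sq_lintegral_mul_le hK.of_uncurry_left.aemeasurable hf).trans
          (by gcongr; exact ha x)
    _ = a * ∫⁻ y, (∫⁻ x, K x y ∂μ) * f y ^ 2 ∂ν := by
        have hinner : AEMeasurable (fun x => ∫⁻ y, K x y * f y ^ 2 ∂ν) μ :=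
          hKf.lintegral_prod_right'
        rw [lintegral_const_mul'' _ hinner, lintegral_lintegral_swap hKf]
        simp_rw [lintegral_mul_const _ hK.of_uncurry_right]
    _ ≤ a * ∫⁻ y, b * f y ^ 2 ∂ν := by gcongr with y; exact hb y
    _ = a * b * ∫⁻ y, f y ^ 2 ∂ν := by
        rw [lintegral_const_mul'' _ (hf.pow_const 2), mul_assoc]

end SchurTest

section Translation

variable {G : Type*} [MeasurableSpace G] [AddCommGroup G] [MeasurableAdd₂ G] [MeasurableNeg G]
  {μ : Measure G} [SFinite μ] [μ.IsAddLeftInvariant] [μ.IsNegInvariant]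

lemma lintegral_lintegral_mul_sub_mul_sub {A : G → ℝ≥0∞} (hA : Measurable A) (a : G) :
    ∫⁻ b, ∫⁻ m, A (m - a) * A (m - b) ∂μ ∂μ = (∫⁻ m, A m ∂μ) ^ 2 := by
  have hmeas : Measurable fun q : G × G => A (q.2 - a) * A (q.2 - q.1) := by fun_prop
  rw [lintegral_lintegral_swap hmeas.aemeasurable]
  calc ∫⁻ m, ∫⁻ b, A (m - a) * A (m - b) ∂μ ∂μ = ∫⁻ m, A (m - a) * ∫⁻ b, A b ∂μ ∂μ := by
        refine lintegral_congr fun m => ?_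
        rw [lintegral_const_mul _ (by fun_prop), lintegral_sub_left_eq_self]
    _ = (∫⁻ m, A m ∂μ) ^ 2 := by
        rw [lintegral_mul_const _ (by fun_prop), lintegral_sub_right_eq_self, sq]

end Translation

section Gaussian

variable {e : ℕ} {s : ℝ}

lemma gaussPhi1_nonneg (hs : 0 ≤ s) (u : ℝ) : 0 ≤ gaussPhi1 u s := by
  unfold gaussPhi1; positivity

lemma gaussPhi_nonneg (hs : 0 ≤ s) (z : EuclideanSpace ℝ (Fin e)) : 0 ≤ gaussPhi e z s := by
  unfold gaussPhi; positivity

@[fun_prop]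
lemma measurable_gaussPhi1 : Measurable fun u => gaussPhi1 u s := by
  unfold gaussPhi1; fun_prop

@[fun_prop]
lemma measurable_gaussPhi : Measurable fun z => gaussPhi e z s := by
  unfold gaussPhi; fun_prop

lemma ofReal_gaussPhi1 (hs : 0 ≤ s) (u : ℝ) :
    ENNReal.ofReal (gaussPhi1 u s) = gaussianPDF 0 s.toNNReal u := by
  rw [gaussPhi1, gaussianPDF, gaussianPDFReal, Real.coe_toNNReal _ hs, Real.sqrt_eq_rpow,
    ← Real.rpow_neg (by positivity), sub_zero, neg_div]

lemma lintegral_ofReal_gaussPhi1 (hs : 0 < s) :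
    ∫⁻ u, ENNReal.ofReal (gaussPhi1 u s) = 1 := by
  simp_rw [ofReal_gaussPhi1 hs.le]
  exact lintegral_gaussianPDF_eq_one 0 (Real.toNNReal_pos.mpr hs).ne'

lemma integral_gaussPhi (hs : 0 < s) : ∫ z : EuclideanSpace ℝ (Fin e), gaussPhi e z s = 1 := by
  have hexp : ∀ z : EuclideanSpace ℝ (Fin e),
      rexp (-‖z‖ ^ 2 / (2 * s)) = rexp (-(1 / (2 * s)) * ‖z‖ ^ 2) := fun z => by ring_nf
  simp_rw [gaussPhi, hexp]
  rw [integral_const_mul, GaussianFourier.integral_rexp_neg_mul_sq_norm (by positivity),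
    finrank_euclideanSpace_fin, show π / (1 / (2 * s)) = 2 * π * s by field_simp,
    ← Real.rpow_add (by positivity), neg_div, neg_add_cancel, Real.rpow_zero]

lemma lintegral_ofReal_gaussPhi (hs : 0 < s) :
    ∫⁻ z : EuclideanSpace ℝ (Fin e), ENNReal.ofReal (gaussPhi e z s) = 1 := by
  rw [← ofReal_integral_eq_lintegral_ofReal
    (Integrable.of_integral_ne_zero (by simp [integral_gaussPhi hs]))
    (ae_of_all _ (gaussPhi_nonneg hs.le)), integral_gaussPhi hs, ENNReal.ofReal_one]

end Gaussian

section Kernel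

variable {e : ℕ} {s : ℝ}

noncomputable def gaussKernel1 (s a b : ℝ) : ℝ≥0∞ :=
  ∫⁻ m, ENNReal.ofReal (gaussPhi1 (m - a) s) * ENNReal.ofReal (gaussPhi1 (m - b) s)

noncomputable def gaussKernel (e : ℕ) (s : ℝ) (x y : ℝ × EuclideanSpace ℝ (Fin e)) :
    ℝ≥0∞ :=
  gaussKernel1 s x.1 y.1 * ENNReal.ofReal (gaussPhi e (x.2 - y.2) s)

lemma measurable_gaussKernel1 : Measurable (uncurry (gaussKernel1 s)) :=
  Measurable.lintegral_prod_right' (f := fun q : (ℝ × ℝ) × ℝ =>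
    ENNReal.ofReal (gaussPhi1 (q.2 - q.1.1) s) * ENNReal.ofReal (gaussPhi1 (q.2 - q.1.2) s))
    (by fun_prop)

lemma gaussKernel1_comm (a b : ℝ) : gaussKernel1 s a b = gaussKernel1 s b a :=
  lintegral_congr fun _ => mul_comm _ _

lemma lintegral_gaussKernel1_right (hs : 0 < s) (a : ℝ) :
    ∫⁻ b, gaussKernel1 s a b = 1 := by
  simp only [gaussKernel1]
  rw [lintegral_lintegral_mul_sub_mul_sub (A := fun u => ENNReal.ofReal (gaussPhi1 u s))
    (by fun_prop), lintegral_ofReal_gaussPhi1 hs, one_pow]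

lemma lintegral_gaussKernel1_left (hs : 0 < s) (b : ℝ) :
    ∫⁻ a, gaussKernel1 s a b = 1 :=
  (lintegral_congr fun a => gaussKernel1_comm a b).trans (lintegral_gaussKernel1_right hs b)

lemma measurable_gaussKernel : Measurable (uncurry (gaussKernel e s)) :=
  (measurable_gaussKernel1.comp (measurable_fst.fst.prodMk measurable_snd.fst)).mul
    (by fun_prop)

lemma lintegral_gaussKernel_right (hs : 0 < s) (x : ℝ × EuclideanSpace ℝ (Fin e)) :
    ∫⁻ y, gaussKernel e s x y = 1 := by
  simp only [gaussKernel]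
  rw [Measure.volume_eq_prod, lintegral_prod_mul (f := gaussKernel1 s x.1)
    (g := fun v => ENNReal.ofReal (gaussPhi e (x.2 - v) s))
    (measurable_gaussKernel1.comp measurable_prodMk_left).aemeasurable (by fun_prop),
    lintegral_gaussKernel1_right hs,
    lintegral_sub_left_eq_self (fun z => ENNReal.ofReal (gaussPhi e z s)),
    lintegral_ofReal_gaussPhi hs, one_mul]

lemma lintegral_gaussKernel_left (hs : 0 < s) (y : ℝ × EuclideanSpace ℝ (Fin e)) :
    ∫⁻ x, gaussKernel e s x y = 1 := by
  simp only [gaussKernel]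
  rw [Measure.volume_eq_prod, lintegral_prod_mul (f := fun a => gaussKernel1 s a y.1)
    (g := fun v => ENNReal.ofReal (gaussPhi e (v - y.2) s))
    (measurable_gaussKernel1.comp measurable_prodMk_right).aemeasurable (by fun_prop),
    lintegral_gaussKernel1_left hs,
    lintegral_sub_right_eq_self (fun z => ENNReal.ofReal (gaussPhi e z s)),
    lintegral_ofReal_gaussPhi hs, one_mul]

end Kernel

lemma ofReal_setIntegral_le_lintegral_gaussKernel {e : ℕ} {s C : ℝ} (hs : 0 ≤ s) (hC : 0 ≤ C)
    {x : ℝ × EuclideanSpace ℝ (Fin e)} {p : ℝ → ℝ × EuclideanSpace ℝ (Fin e) → ℝ}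
    (hp : ∀ m y, 0 ≤ p m y)
    (hpb : ∀ m y, p m y ≤ C * (gaussPhi1 (m - y.1) s * gaussPhi1 (m - x.1) s *
      gaussPhi e (x.2 - y.2) s) * (if x.1 < m ∧ y.1 < m then 1 else 0))
    {f : ℝ × EuclideanSpace ℝ (Fin e) → ℝ} (hf : ∀ y, 0 ≤ f y) (hfm : AEMeasurable f)
    (S : Set ℝ) :
    ENNReal.ofReal (∫ m in S, ∫ y, p m y * f y) ≤
      ENNReal.ofReal C * ∫⁻ y, gaussKernel e s x y * ENNReal.ofReal (f y) := by
  set A : ℝ → ℝ≥0∞ := fun u => ENNReal.ofReal (gaussPhi1 u s)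
  set B : EuclideanSpace ℝ (Fin e) → ℝ≥0∞ := fun z => ENNReal.ofReal (gaussPhi e z s)
  set F := fun y => ENNReal.ofReal (f y)
  have hpf_nonneg (m y) : 0 ≤ p m y * f y := mul_nonneg (hp m y) (hf y)
  have hdom (m y) : ENNReal.ofReal (p m y * f y) ≤
      ENNReal.ofReal C * (A (m - x.1) * A (m - y.1) * (B (x.2 - y.2) * F y)) := by
    have hφx := gaussPhi1_nonneg hs (m - x.1)
    have hφy := gaussPhi1_nonneg hs (m - y.1)
    have hψ := gaussPhi_nonneg hs (x.2 - y.2)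
    have hpb' : p m y ≤ C * (gaussPhi1 (m - y.1) s * gaussPhi1 (m - x.1) s *
        gaussPhi e (x.2 - y.2) s) :=
      (hpb m y).trans (mul_le_of_le_one_right (by positivity) (by split_ifs <;> norm_num))
    calc ENNReal.ofReal (p m y * f y)
        ≤ ENNReal.ofReal (C * (gaussPhi1 (m - x.1) s * gaussPhi1 (m - y.1) s *
            (gaussPhi e (x.2 - y.2) s * f y))) :=
          ENNReal.ofReal_le_ofReal ((mul_le_mul_of_nonneg_right hpb' (hf y)).trans_eq (by ring))
      _ = ENNReal.ofReal C * (A (m - x.1) * A (m - y.1) * (B (x.2 - y.2) * F y)) := by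
          rw [ENNReal.ofReal_mul hC, ENNReal.ofReal_mul (mul_nonneg hφx hφy),
            ENNReal.ofReal_mul hφx, ENNReal.ofReal_mul hψ]
  have hmeas : AEMeasurable
      (uncurry fun m y => A (m - x.1) * A (m - y.1) * (B (x.2 - y.2) * F y))
      (volume.prod volume) :=
    (Measurable.aemeasurable (by fun_prop)).mul
      ((Measurable.aemeasurable (by fun_prop)).mul hfm.ennreal_ofReal.comp_snd)
  calc ENNReal.ofReal (∫ m in S, ∫ y, p m y * f y)
      ≤ ∫⁻ m in S, ENNReal.ofReal (∫ y, p m y * f y) :=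
        ofReal_integral_le_lintegral_ofReal fun m => integral_nonneg (hpf_nonneg m)
    _ ≤ ∫⁻ m, ∫⁻ y, ENNReal.ofReal (p m y * f y) :=
        (setLIntegral_le_lintegral _ _).trans (lintegral_mono fun m =>
          ofReal_integral_le_lintegral_ofReal (hpf_nonneg m))
    _ ≤ ∫⁻ m, ∫⁻ y, ENNReal.ofReal C * (A (m - x.1) * A (m - y.1) * (B (x.2 - y.2) * F y)) := by
        gcongr with m y; exact hdom m y
    _ = ENNReal.ofReal C * ∫⁻ y, ∫⁻ m, A (m - x.1) * A (m - y.1) * (B (x.2 - y.2) * F y) := by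
        simp_rw [lintegral_const_mul' _ _ ENNReal.ofReal_ne_top]
        rw [lintegral_lintegral_swap hmeas]
    _ = ENNReal.ofReal C * ∫⁻ y, gaussKernel e s x y * F y := by
        refine congrArg _ (lintegral_congr fun y => ?_)
        rw [lintegral_mul_const _ (by fun_prop), gaussKernel, gaussKernel1, mul_assoc]

/-- If the conditional density `p(m, x; t, x₀)` satisfies the Gaussian bound
`p(m,x;t,x₀) ≤ C_T φ_{d+1}(m - x₀¹, m - x¹, x̃ - x̃₀; 2t) 1_{m > max(x¹, x₀¹)}`
and `f₀ ∈ L¹ ∩ L²` is a probability density, then, with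
`p_V(m,x;t) = ∫ p(m,x;t,x₀) f₀(x₀) dx₀`, one has
`sup_{t ∈ (0,T]} ∫ (∫_{m ≥ x¹} p_V(m,x;t) dm)² dx ≤ K · C_T² ‖f₀‖²_{L²}`
for a constant `K` depending only on the dimension.  Here a point of `ℝ^d`
is written `x = (x¹, x̃) ∈ ℝ × ℝ^{d-1}` with `e := d - 1`. -/
theorem sup_L2_bound_of_gaussian_domination (e : ℕ) :
    ∃ K : ℝ, 0 < K ∧
      ∀ (T C_T : ℝ), 0 < T → 0 < C_T →
      ∀ (p : ℝ → (ℝ × EuclideanSpace ℝ (Fin e)) → ℝ → (ℝ × EuclideanSpace ℝ (Fin e)) → ℝ)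
        (f₀ : (ℝ × EuclideanSpace ℝ (Fin e)) → ℝ),
        (∀ m x t x₀, 0 ≤ p m x t x₀) →
        (∀ m x x₀, ∀ t ∈ Set.Ioc (0 : ℝ) T,
          p m x t x₀ ≤ C_T * (gaussPhi1 (m - x₀.1) (2 * t) * gaussPhi1 (m - x.1) (2 * t) *
            gaussPhi e (x.2 - x₀.2) (2 * t)) * (if x.1 < m ∧ x₀.1 < m then 1 else 0)) →
        (∀ x, 0 ≤ f₀ x) → Integrable f₀ → MemLp f₀ 2 volume → (∫ x, f₀ x = 1) →
        ∀ t ∈ Set.Ioc (0 : ℝ) T,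
          (∫ x : ℝ × EuclideanSpace ℝ (Fin e),
              (∫ m in Set.Ici x.1, ∫ x₀, p m x t x₀ * f₀ x₀) ^ 2) ≤
            K * C_T ^ 2 * ∫ x, f₀ x ^ 2 := by
  refine ⟨1, one_pos, fun T C_T _ hC p f₀ hp hpb hf₀ _ hf₀L2 _ t ht => ?_⟩
  have hs : 0 < 2 * t := by linarith [ht.1]
  have hf₀m : AEMeasurable f₀ := hf₀L2.aestronglyMeasurable.aemeasurable
  set F := fun x₀ => ENNReal.ofReal (f₀ x₀)
  have hpoint (x : ℝ × EuclideanSpace ℝ (Fin e)) :=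
    ofReal_setIntegral_le_lintegral_gaussKernel hs.le hC.le (hp · x t) (hpb · x · t ht) hf₀ hf₀m
      (Set.Ici x.1)
  have hschur : ∫⁻ x, (∫⁻ x₀, gaussKernel e (2 * t) x x₀ * F x₀) ^ 2 ≤ ∫⁻ x₀, F x₀ ^ 2 := by
    simpa using lintegral_sq_lintegral_mul_le measurable_gaussKernel hf₀m.ennreal_ofReal
      (fun x => (lintegral_gaussKernel_right hs x).le)
      (fun x₀ => (lintegral_gaussKernel_left hs x₀).le)
  rw [one_mul, ← ENNReal.ofReal_le_ofReal_iff (by positivity)]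
  calc ENNReal.ofReal (∫ x, (∫ m in Set.Ici x.1, ∫ x₀, p m x t x₀ * f₀ x₀) ^ 2)
      ≤ ∫⁻ x, ENNReal.ofReal (∫ m in Set.Ici x.1, ∫ x₀, p m x t x₀ * f₀ x₀) ^ 2 := by
        refine (ofReal_integral_le_lintegral_ofReal fun x => sq_nonneg _).trans_eq
          (lintegral_congr fun x => ENNReal.ofReal_pow ?_ 2)
        exact integral_nonneg fun m => integral_nonneg fun x₀ => mul_nonneg (hp _ _ _ _) (hf₀ _)
    _ ≤ ∫⁻ x, (ENNReal.ofReal C_T * ∫⁻ x₀, gaussKernel e (2 * t) x x₀ * F x₀) ^ 2 := by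
        gcongr with x; exact hpoint x
    _ = ENNReal.ofReal C_T ^ 2 * ∫⁻ x, (∫⁻ x₀, gaussKernel e (2 * t) x x₀ * F x₀) ^ 2 := by
        simp_rw [mul_pow]
        rw [lintegral_const_mul' _ _ (by simp)]
    _ ≤ ENNReal.ofReal C_T ^ 2 * ∫⁻ x₀, F x₀ ^ 2 := mul_le_mul' le_rfl hschur
    _ = ENNReal.ofReal (C_T ^ 2 * ∫ x, f₀ x ^ 2) := by
        rw [ENNReal.ofReal_mul (by positivity), ENNReal.ofReal_pow hC.le,
          ofReal_integral_eq_lintegral_ofReal hf₀L2.integrable_sq (ae_of_all _ (sq_nonneg <| f₀ ·))]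
        simp_rw [F, ENNReal.ofReal_pow (hf₀ _)]
end

section
/- Let B ∈ C¹_b(ℝ^d, ℝ^d) and let Y^x solve dY^x_t = -B(Y^x_t) dt + dW_t, Y^x_0 = x, with W a standard d-dimensional Brownian motion. Define Q_t f(x) := E[ f(Y^x_t) exp( -∫_0^t div B(Y^x_u) du ) ] for f ∈ L²(ℝ^d). Then there is a constant C depending only on ‖B‖_∞, ‖div B‖_∞, T such that ‖Q_t f‖_{L²(ℝ^d)} ≤ C ‖f‖_{L²(ℝ^d)} for all 0 ≤ t ≤ T; i.e. each Q_t is a bounded operator on L²(ℝ^d). -/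
/-! For fixed `ω` the map `x ↦ Y^x_t(ω)` is controlled pathwise. Where the drift integral is
defined, the difference of two solutions solves a linear integral equation, and Grönwall run
backwards in time gives `‖x - x'‖ ≤ exp (‖DB‖_∞ t) ‖Y^x_t - Y^{x'}_t‖`; elsewhere the integral
takes the junk value `0` and the map is the translation by `W_t`. Since Lebesgue measure on
`Fin d → ℝ` is the `d`-dimensional Hausdorff measure of the sup metric, which an antilipschitz
map does not shrink, the push-forward of Lebesgue measure under the flow is at most
`exp (d ‖DB‖_∞ t) + 1` times Lebesgue measure. Bounding the weight by `exp (d ‖DB‖_∞ T)`,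
Cauchy–Schwarz in `ω` and Tonelli then give the `L²` bound, with no change of measure. -/

open MeasureTheory ProbabilityTheory

/-- Divergence of a vector field `B : ℝ^d → ℝ^d`. -/
noncomputable def divergence (d : ℕ) (B : (Fin d → ℝ) → (Fin d → ℝ)) (y : Fin d → ℝ) : ℝ :=
  ∑ k : Fin d, fderiv ℝ B y (Pi.single k 1) k

/-- The Feynman–Kac operator
`Q_t f (x) = E[ f(Y^x_t) exp(-∫_0^t div B (Y^x_u) du) ]`. -/
noncomputable def feynmanKac (d : ℕ) {Ω : Type*} [MeasureSpace Ω]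
    (Y : (Fin d → ℝ) → ℝ → Ω → (Fin d → ℝ)) (B : (Fin d → ℝ) → (Fin d → ℝ))
    (t : ℝ) (f : (Fin d → ℝ) → ℝ) (x : Fin d → ℝ) : ℝ :=
  ∫ ω, f (Y x t ω) * Real.exp (-∫ s in Set.Ioc (0 : ℝ) t, divergence d B (Y x s ω))

open Set Real Topology
open scoped NNReal ENNReal

theorem le_mul_exp_of_le_add_integral {u : ℝ → ℝ} {a b c L : ℝ} (hab : a ≤ b) (hL : 0 ≤ L)
    (hu : ContinuousOn u (Icc a b)) (hbound : ∀ v ∈ Icc a b, u v ≤ c + L * ∫ r in a..v, u r) :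
    u b ≤ c * exp (L * (b - a)) := by
  set U : ℝ → ℝ := fun v => ∫ r in a..v, u r
  have hU : ContinuousOn U (Icc a b) := by
    have h := intervalIntegral.continuousOn_primitive_interval (μ := volume) (a := a) (b := b)
      (by rw [uIcc_of_le hab]; exact hu.integrableOn_Icc)
    rwa [uIcc_of_le hab] at h
  have hU' : ∀ x ∈ Ico a b, HasDerivWithinAt U (u x) (Ici x) x := by
    intro x hx
    have hmem : Icc a b ∈ 𝓝[>] x :=
      Filter.mem_of_superset (Icc_mem_nhdsGT hx.2) (Icc_subset_Icc_left hx.1)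
    exact intervalIntegral.integral_hasDerivWithinAt_right
      ((hu.mono (Icc_subset_Icc_right hx.2.le)).intervalIntegrable_of_Icc hx.1)
      ⟨Icc a b, hmem, hu.aestronglyMeasurable measurableSet_Icc⟩
      ((hu x (Ico_subset_Icc_self hx)).mono_of_mem_nhdsWithin hmem)
  have hUb : U b ≤ gronwallBound 0 L c (b - a) :=
    le_gronwallBound_of_liminf_deriv_right_le hU
      (fun x hx _ hr => (hU' x hx).liminf_right_slope_le hr) (by simp [U])
      (fun x hx => by linarith [hbound x (Ico_subset_Icc_self hx)]) b ⟨hab, le_rfl⟩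
  calc u b ≤ c + L * U b := hbound b ⟨hab, le_rfl⟩
    _ ≤ c + L * gronwallBound 0 L c (b - a) := by gcongr
    _ = c * exp (L * (b - a)) := by
      rcases hL.eq_or_lt with rfl | hL
      · simp
      · rw [gronwallBound_of_K_ne_0 hL.ne']
        field_simp
        ring

theorem norm_le_exp_mul_norm_of_eq_sub_integral {E : Type*} [NormedAddCommGroup E]
    [NormedSpace ℝ E] {g ψ : ℝ → E} {c : E} {L t : ℝ} (hL : 0 ≤ L) (ht : 0 ≤ t)
    (hψ : IntegrableOn ψ (Ioc 0 t)) (hg : ∀ s ∈ Icc 0 t, g s = c - ∫ r in Ioc 0 s, ψ r)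
    (hψg : ∀ s ∈ Ioc 0 t, ‖ψ s‖ ≤ L * ‖g s‖) :
    ‖c‖ ≤ exp (L * t) * ‖g t‖ := by
  have hψ' : ∀ a ∈ Icc 0 t, ∀ b ∈ Icc 0 t, IntervalIntegrable ψ volume a b := fun a ha b hb =>
    intervalIntegrable_iff.2 <| hψ.mono_set <|
      Ioc_subset_Ioc (le_min ha.1 hb.1) (max_le ha.2 hb.2)
  have hg' : ∀ s ∈ Icc 0 t, g s = c - ∫ r in (0 : ℝ)..s, ψ r := fun s hs => by
    rw [hg s hs, intervalIntegral.integral_of_le hs.1]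
  have hg_cont : ContinuousOn g (Icc 0 t) := by
    have h := intervalIntegral.continuousOn_primitive_interval' (hψ' 0 ⟨le_rfl, ht⟩ t ⟨ht, le_rfl⟩)
      left_mem_uIcc
    rw [uIcc_of_le ht] at h
    exact (continuousOn_const.sub h).congr hg'
  have hrev : MapsTo (t - ·) (Icc 0 t) (Icc 0 t) := fun v hv =>
    ⟨by linarith [hv.2], by linarith [hv.1]⟩
  have hu : ContinuousOn (fun v => ‖g (t - v)‖) (Icc 0 t) :=
    (hg_cont.comp (continuousOn_const.sub continuousOn_id) hrev).norm
  have hbound : ∀ v ∈ Icc 0 t, ‖g (t - v)‖ ≤ ‖g t‖ + L * ∫ r in (0 : ℝ)..v, ‖g (t - r)‖ := by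
    intro v hv
    have htv := hrev hv
    have hvt : t - v ≤ t := by linarith [hv.1]
    have hdiff : g (t - v) = g t + ∫ r in (t - v)..t, ψ r := by
      rw [hg' _ htv, hg' t ⟨ht, le_rfl⟩, ← intervalIntegral.integral_interval_sub_left
        (hψ' 0 ⟨le_rfl, ht⟩ t ⟨ht, le_rfl⟩) (hψ' 0 ⟨le_rfl, ht⟩ _ htv)]
      abel
    calc ‖g (t - v)‖ ≤ ‖g t‖ + ‖∫ r in (t - v)..t, ψ r‖ := hdiff ▸ norm_add_le _ _
      _ ≤ ‖g t‖ + ∫ r in (t - v)..t, L * ‖g r‖ := by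
        gcongr
        refine (intervalIntegral.norm_integral_le_integral_norm hvt).trans ?_
        refine intervalIntegral.integral_mono_on_of_le_Ioo hvt (hψ' _ htv t ⟨ht, le_rfl⟩).norm
          ((continuousOn_const.mul (hg_cont.mono (Icc_subset_Icc htv.1 le_rfl)).norm
            ).intervalIntegrable_of_Icc hvt) fun r hr => hψg r ⟨by linarith [htv.1, hr.1], hr.2.le⟩
      _ = ‖g t‖ + L * ∫ r in (0 : ℝ)..v, ‖g (t - r)‖ := by
        rw [intervalIntegral.integral_const_mul,
          intervalIntegral.integral_comp_sub_left (fun r => ‖g r‖) t, sub_zero]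
  have h := le_mul_exp_of_le_add_integral ht hL hu hbound
  rwa [sub_self, hg 0 ⟨le_rfl, ht⟩, Ioc_self, Measure.restrict_empty, integral_zero_measure,
    sub_zero, sub_zero, mul_comm] at h

theorem antilipschitzWith_restrict_of_eq_add_integral {E : Type*} [NormedAddCommGroup E]
    [NormedSpace ℝ E] {B : E → E} {L : ℝ≥0} (hB : LipschitzWith L B) {y : E → ℝ → E}
    {w : ℝ → E} {t : ℝ} (ht : 0 ≤ t)
    (hy : ∀ x, ∀ s ∈ Icc 0 t, y x s = x + -(∫ r in Ioc 0 s, B (y x r)) + w s) :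
    AntilipschitzWith (exp (L * t)).toNNReal
      ({x | IntegrableOn (fun s => B (y x s)) (Ioc 0 t)}.domRestrict (y · t)) := by
  refine AntilipschitzWith.of_le_mul_dist fun ⟨x, hx⟩ ⟨x', hx'⟩ => ?_
  simp only [Subtype.dist_eq, dist_eq_norm, coe_toNNReal _ (exp_pos _).le]
  refine norm_le_exp_mul_norm_of_eq_sub_integral (ψ := fun r => B (y x r) - B (y x' r)) L.2 ht
    (hx.sub hx') (fun s hs => ?_) fun s _ => hB.norm_sub_le _ _
  have hsub : Ioc 0 s ⊆ Ioc 0 t := Ioc_subset_Ioc_right hs.2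
  rw [integral_sub (hx.mono_set hsub) (hx'.mono_set hsub), hy x s hs, hy x' s hs]
  abel

theorem volume_inter_preimage_le_of_antilipschitzWith {ι : Type*} [Fintype ι]
    {F : (ι → ℝ) → ι → ℝ} {S : Set (ι → ℝ)} {K : ℝ≥0}
    (hF : AntilipschitzWith K (S.domRestrict F)) (A : Set (ι → ℝ)) :
    volume (S ∩ F ⁻¹' A) ≤ (K : ℝ≥0∞) ^ Fintype.card ι * volume A := by
  have hd : (0 : ℝ) ≤ Fintype.card ι := Nat.cast_nonneg _
  have himage : S ∩ F ⁻¹' A = Subtype.val '' (S.domRestrict F ⁻¹' A) := by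
    ext x; simp [and_comm]
  rw [← hausdorffMeasure_pi_real, himage,
    isometry_subtype_coe.hausdorffMeasure_image (Or.inl hd), ← ENNReal.rpow_natCast]
  exact hF.hausdorffMeasure_preimage_le hd A

theorem map_volume_le_smul_of_antilipschitzWith {ι : Type*} [Fintype ι]
    {F : (ι → ℝ) → ι → ℝ} (hFm : Measurable F) {S : Set (ι → ℝ)} {K : ℝ≥0}
    (hF : AntilipschitzWith K (S.domRestrict F)) {w : ι → ℝ} (hw : ∀ x ∉ S, F x = x + w) :
    volume.map F ≤ ((K : ℝ≥0∞) ^ Fintype.card ι + 1) • volume := by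
  refine Measure.le_iff.2 fun A hA => ?_
  have hcover : F ⁻¹' A ⊆ (S ∩ F ⁻¹' A) ∪ (· + w) ⁻¹' A := fun x hx => by
    by_cases hxS : x ∈ S
    · exact Or.inl ⟨hxS, hx⟩
    · exact Or.inr (by simpa [mem_preimage, hw x hxS] using hx)
  calc volume.map F A = volume (F ⁻¹' A) := Measure.map_apply hFm hA
    _ ≤ volume (S ∩ F ⁻¹' A) + volume ((· + w) ⁻¹' A) :=
      (measure_mono hcover).trans (measure_union_le _ _)
    _ ≤ (K : ℝ≥0∞) ^ Fintype.card ι * volume A + volume A := by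
      rw [measure_preimage_add_right]
      gcongr
      exact volume_inter_preimage_le_of_antilipschitzWith hF A
    _ = (((K : ℝ≥0∞) ^ Fintype.card ι + 1) • volume) A := by
      rw [Measure.smul_apply, smul_eq_mul, add_mul, one_mul]

theorem sq_lintegral_le_lintegral_sq {α : Type*} [MeasurableSpace α] {μ : Measure α}
    [IsProbabilityMeasure μ] {h : α → ℝ≥0∞} (hh : AEMeasurable h μ) :
    (∫⁻ a, h a ∂μ) ^ 2 ≤ ∫⁻ a, h a ^ 2 ∂μ := by
  have hCS := ENNReal.lintegral_mul_le_Lp_mul_Lq μ Real.HolderConjugate.two_two hh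
    (aemeasurable_const (b := 1))
  simp only [Pi.mul_apply, mul_one, one_pow, ENNReal.one_rpow, lintegral_const, measure_univ,
    ENNReal.rpow_two] at hCS
  calc (∫⁻ a, h a ∂μ) ^ 2 ≤ ((∫⁻ a, h a ^ 2 ∂μ) ^ (1 / 2 : ℝ)) ^ 2 := by gcongr
    _ = ∫⁻ a, h a ^ 2 ∂μ := by
      rw [← ENNReal.rpow_two, ← ENNReal.rpow_mul]; norm_num

theorem eLpNorm_two_le_of_lintegral_sq_le {α β E F : Type*} [MeasurableSpace α]
    [MeasurableSpace β] [NormedAddCommGroup E] [NormedAddCommGroup F] {μ : Measure α}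
    {ν : Measure β} {u : α → E} {v : β → F} {K : ℝ≥0∞}
    (h : ∫⁻ a, ‖u a‖ₑ ^ 2 ∂μ ≤ K ^ 2 * ∫⁻ b, ‖v b‖ₑ ^ 2 ∂ν) :
    eLpNorm u 2 μ ≤ K * eLpNorm v 2 ν := by
  simp only [eLpNorm_eq_lintegral_rpow_enorm_toReal two_ne_zero ENNReal.ofNat_ne_top,
    ENNReal.toReal_ofNat, ENNReal.rpow_two]
  calc (∫⁻ a, ‖u a‖ₑ ^ 2 ∂μ) ^ (1 / 2 : ℝ)
      ≤ (K ^ 2 * ∫⁻ b, ‖v b‖ₑ ^ 2 ∂ν) ^ (1 / 2 : ℝ) := by gcongr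
    _ = K * (∫⁻ b, ‖v b‖ₑ ^ 2 ∂ν) ^ (1 / 2 : ℝ) := by
      rw [ENNReal.mul_rpow_of_nonneg _ _ (by norm_num), ← ENNReal.rpow_two, ← ENNReal.rpow_mul]
      norm_num

theorem abs_divergence_le (d : ℕ) (B : (Fin d → ℝ) → Fin d → ℝ) (y : Fin d → ℝ) :
    |divergence d B y| ≤ d * ‖fderiv ℝ B y‖ := by
  calc |divergence d B y| ≤ ∑ _k : Fin d, ‖fderiv ℝ B y‖ := by
        refine (Finset.abs_sum_le_sum_abs _ _).trans (Finset.sum_le_sum fun k _ => ?_)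
        calc |fderiv ℝ B y (Pi.single k 1) k| ≤ ‖fderiv ℝ B y (Pi.single k 1)‖ :=
              norm_le_pi_norm (fderiv ℝ B y (Pi.single k 1)) k
          _ ≤ ‖fderiv ℝ B y‖ * ‖(Pi.single k 1 : Fin d → ℝ)‖ := ContinuousLinearMap.le_opNorm _ _
          _ = ‖fderiv ℝ B y‖ := by rw [Pi.norm_single, norm_one, mul_one]
    _ = d * ‖fderiv ℝ B y‖ := by simp

theorem abs_setIntegral_divergence_le {d : ℕ} {B : (Fin d → ℝ) → Fin d → ℝ} {L : ℝ}
    (hB : ∀ y, ‖fderiv ℝ B y‖ ≤ L) (γ : ℝ → Fin d → ℝ) {t : ℝ} (ht : 0 ≤ t) :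
    |∫ s in Ioc 0 t, divergence d B (γ s)| ≤ d * L * t := by
  have h := norm_setIntegral_le_of_norm_le_const (f := fun s => divergence d B (γ s))
    (C := d * L) (measure_Ioc_lt_top (μ := (volume : Measure ℝ)) (a := 0) (b := t)) fun s _ =>
      (abs_divergence_le d B (γ s)).trans (by gcongr; exact hB _)
  rwa [Real.volume_real_Ioc_of_le ht, sub_zero] at h

section feynmanKac

variable {d : ℕ} {Ω : Type*} [MeasureSpace Ω] {Y : (Fin d → ℝ) → ℝ → Ω → Fin d → ℝ}
  {B : (Fin d → ℝ) → Fin d → ℝ} {t : ℝ}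

theorem enorm_feynmanKac_le {M : ℝ} (hM : ∀ x ω, |∫ s in Ioc 0 t, divergence d B (Y x s ω)| ≤ M)
    (f : (Fin d → ℝ) → ℝ) (x : Fin d → ℝ) :
    ‖feynmanKac d Y B t f x‖ₑ ≤ ENNReal.ofReal (exp M) * ∫⁻ ω, ‖f (Y x t ω)‖ₑ := by
  rw [← lintegral_const_mul' _ _ ENNReal.ofReal_ne_top]
  refine (enorm_integral_le_lintegral_enorm _).trans (lintegral_mono fun ω => ?_)
  rw [enorm_mul, mul_comm, Real.enorm_eq_ofReal (exp_nonneg _)]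
  gcongr
  exact (neg_le_abs _).trans (hM x ω)

theorem feynmanKac_ae_eq_of_ae_eq [SFinite (ℙ : Measure Ω)]
    (hY : Measurable fun p : (Fin d → ℝ) × Ω => Y p.1 t p.2)
    {c : ℝ≥0∞} (hmap : ∀ ω, volume.map (Y · t ω) ≤ c • volume) {f g : (Fin d → ℝ) → ℝ}
    (hfg : f =ᵐ[volume] g) : feynmanKac d Y B t f =ᵐ[volume] feynmanKac d Y B t g := by
  obtain ⟨N, hfgN, hN, hN0⟩ := exists_measurable_superset_of_null (ae_iff.1 hfg)
  have hnotMem : ∀ᵐ x ∂volume, ∀ᵐ ω ∂ℙ, Y x t ω ∉ N := by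
    refine (Measure.ae_ae_comm (p := fun x ω => Y x t ω ∉ N) (hY hN.compl)).2
      (ae_of_all _ fun ω => ?_)
    have hqmp : Measure.QuasiMeasurePreserving (Y · t ω) volume volume :=
      ⟨hY.comp measurable_prodMk_right, Measure.absolutelyContinuous_of_le_smul (hmap ω)⟩
    exact measure_eq_zero_iff_ae_notMem.1 (hqmp.preimage_null hN0)
  filter_upwards [hnotMem] with x hx
  refine integral_congr_ae (hx.mono fun ω hω => ?_)
  simp only [not_not.1 (mt (@hfgN _) hω)]

variable [IsProbabilityMeasure (ℙ : Measure Ω)]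

theorem lintegral_sq_feynmanKac_le (hY : Measurable fun p : (Fin d → ℝ) × Ω => Y p.1 t p.2)
    {M : ℝ} (hM : ∀ x ω, |∫ s in Ioc 0 t, divergence d B (Y x s ω)| ≤ M)
    {c : ℝ≥0∞} (hmap : ∀ ω, volume.map (Y · t ω) ≤ c • volume)
    {f : (Fin d → ℝ) → ℝ} (hf : Measurable f) :
    ∫⁻ x, ‖feynmanKac d Y B t f x‖ₑ ^ 2 ≤ ENNReal.ofReal (exp M) ^ 2 * c * ∫⁻ y, ‖f y‖ₑ ^ 2 := by
  set E := ENNReal.ofReal (exp M)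
  have hfY : Measurable fun p : (Fin d → ℝ) × Ω => ‖f (Y p.1 t p.2)‖ₑ ^ 2 :=
    (hf.comp hY).enorm.pow_const 2
  calc ∫⁻ x, ‖feynmanKac d Y B t f x‖ₑ ^ 2
      ≤ ∫⁻ x, E ^ 2 * ∫⁻ ω, ‖f (Y x t ω)‖ₑ ^ 2 := lintegral_mono fun x => by
        calc _ ≤ (E * ∫⁻ ω, ‖f (Y x t ω)‖ₑ) ^ 2 := by gcongr; exact enorm_feynmanKac_le hM f x
          _ ≤ _ := by
            rw [mul_pow]
            gcongr
            exact sq_lintegral_le_lintegral_sq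
              (hf.comp (hY.comp measurable_prodMk_left)).enorm.aemeasurable
    _ = E ^ 2 * ∫⁻ ω, ∫⁻ x, ‖f (Y x t ω)‖ₑ ^ 2 := by
      rw [lintegral_const_mul _ hfY.lintegral_prod_right',
        lintegral_lintegral_swap hfY.aemeasurable]
    _ ≤ E ^ 2 * ∫⁻ _ω, c * ∫⁻ y, ‖f y‖ₑ ^ 2 := by
      gcongr with ω
      have hYω : Measurable (Y · t ω) := hY.comp measurable_prodMk_right
      rw [← lintegral_map (f := fun y => ‖f y‖ₑ ^ 2) (hf.enorm.pow_const 2) hYω,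
        ← smul_eq_mul, ← lintegral_smul_measure]
      exact lintegral_mono' (hmap ω) le_rfl
    _ = E ^ 2 * c * ∫⁻ y, ‖f y‖ₑ ^ 2 := by
      rw [lintegral_const, measure_univ, mul_one, mul_assoc]

theorem eLpNorm_feynmanKac_le (hY : Measurable fun p : (Fin d → ℝ) × Ω => Y p.1 t p.2)
    {M : ℝ} (hM : ∀ x ω, |∫ s in Ioc 0 t, divergence d B (Y x s ω)| ≤ M)
    {c : ℝ≥0} (hmap : ∀ ω, volume.map (Y · t ω) ≤ (c : ℝ≥0∞) • volume)
    {f : (Fin d → ℝ) → ℝ} (hf : AEStronglyMeasurable f volume) :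
    eLpNorm (feynmanKac d Y B t f) 2 volume ≤
      ENNReal.ofReal (exp M * NNReal.sqrt c) * eLpNorm f 2 volume := by
  rw [eLpNorm_congr_ae (feynmanKac_ae_eq_of_ae_eq hY hmap hf.ae_eq_mk),
    eLpNorm_congr_ae hf.ae_eq_mk]
  refine eLpNorm_two_le_of_lintegral_sq_le ((lintegral_sq_feynmanKac_le hY hM hmap
    hf.stronglyMeasurable_mk.measurable).trans_eq ?_)
  rw [ENNReal.ofReal_mul (exp_nonneg _), mul_pow, ENNReal.ofReal_coe_nnreal, ← ENNReal.coe_pow,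
    NNReal.sq_sqrt]

end feynmanKac

theorem feynmanKac_L2_bounded_general (d : ℕ) {Ω : Type*} [MeasureSpace Ω]
    [IsProbabilityMeasure (ℙ : Measure Ω)]
    (T : ℝ)
    (B : (Fin d → ℝ) → (Fin d → ℝ)) (hB : ContDiff ℝ 1 B)
    (CB : ℝ) (hBderbd : ∀ x, ‖fderiv ℝ B x‖ ≤ CB)
    (W : ℝ → Ω → (Fin d → ℝ))
    (Y : (Fin d → ℝ) → ℝ → Ω → (Fin d → ℝ))
    (hYjm : ∀ t : ℝ, Measurable fun p : (Fin d → ℝ) × Ω => Y p.1 t p.2)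
    (hSDE : ∀ x (t : ℝ), 0 ≤ t → ∀ ω,
      Y x t ω = x + (-(∫ s in Set.Ioc (0 : ℝ) t, B (Y x s ω))) + W t ω) :
    ∃ C : ℝ, 0 < C ∧ ∀ t ∈ Set.Icc (0 : ℝ) T, ∀ f : (Fin d → ℝ) → ℝ,
      MemLp f 2 (volume : Measure (Fin d → ℝ)) →
      eLpNorm (feynmanKac d Y B t f) 2 (volume : Measure (Fin d → ℝ)) ≤
        ENNReal.ofReal C * eLpNorm f 2 (volume : Measure (Fin d → ℝ)) := by
  have hCB : 0 ≤ CB := (norm_nonneg _).trans (hBderbd 0)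
  have hBlip : LipschitzWith CB.toNNReal B :=
    lipschitzWith_of_nnnorm_fderiv_le (hB.differentiable one_ne_zero) fun x =>
      Real.le_toNNReal_iff_coe_le hCB |>.2 (hBderbd x)
  set κ : ℝ≥0 := (exp (CB * T)).toNNReal
  refine ⟨exp (d * CB * T) * NNReal.sqrt (κ ^ d + 1), by positivity, fun t ⟨ht, htT⟩ f hf => ?_⟩
  refine eLpNorm_feynmanKac_le (hYjm t)
    (fun x ω => (abs_setIntegral_divergence_le hBderbd _ ht).trans (by gcongr)) (fun ω => ?_) hf.1
  have hflow := antilipschitzWith_restrict_of_eq_add_integral hBlip (w := (W · ω)) ht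
    fun x s hs => hSDE x s hs.1 ω
  have htranslate : ∀ x ∉ {x | IntegrableOn (fun s => B (Y x s ω)) (Ioc 0 t)},
      Y x t ω = x + W t ω := fun x hx => by
    simpa [integral_undef hx] using hSDE x t ht ω
  refine (map_volume_le_smul_of_antilipschitzWith ((hYjm t).comp measurable_prodMk_right) hflow
    htranslate).trans ?_
  rw [Real.coe_toNNReal _ hCB, Fintype.card_fin]
  push_cast
  gcongr
  exact Real.toNNReal_le_toNNReal (exp_le_exp.2 (by gcongr))

/-- Let `B ∈ C¹_b(ℝ^d, ℝ^d)` and let `Y^x` solve `dY^x_t = -B(Y^x_t) dt + dW_t`,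
`Y^x_0 = x`, with `W` a standard `d`-dimensional Brownian motion (encoded here
by `W 0 = 0` and independent Gaussian increments of variance `t - s`).
Then the Feynman–Kac operator `Q_t` is bounded on `L²(ℝ^d)`, uniformly for
`t ∈ [0, T]`: there is `C > 0` (depending only on `‖B‖_∞`, `‖div B‖_∞`, `T`) with
`‖Q_t f‖_{L²} ≤ C ‖f‖_{L²}`. -/
theorem feynmanKac_L2_bounded (d : ℕ) {Ω : Type*} [MeasureSpace Ω]
    [IsProbabilityMeasure (ℙ : Measure Ω)]
    (T : ℝ) (hT : 0 < T)
    (B : (Fin d → ℝ) → (Fin d → ℝ)) (hB : ContDiff ℝ 1 B)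
    (CB : ℝ) (hBbd : ∀ x, ‖B x‖ ≤ CB) (hBderbd : ∀ x, ‖fderiv ℝ B x‖ ≤ CB)
    (W : ℝ → Ω → (Fin d → ℝ))
    (hW0 : ∀ ω, W 0 ω = 0)
    (hWmeas : ∀ t, Measurable (W t))
    (hWlaw : ∀ s t : ℝ, 0 ≤ s → s < t →
      Measure.map (fun ω => W t ω - W s ω) ℙ =
        Measure.pi fun _ : Fin d => gaussianReal 0 (t - s).toNNReal)
    (hWindep : ∀ s t : ℝ, 0 ≤ s → s ≤ t →
      IndepFun (fun ω => W t ω - W s ω) (fun ω => W s ω) ℙ)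
    (Y : (Fin d → ℝ) → ℝ → Ω → (Fin d → ℝ))
    (hYmeas : ∀ x t, Measurable (Y x t))
    (hYjm : ∀ t : ℝ, Measurable fun p : (Fin d → ℝ) × Ω => Y p.1 t p.2)
    (hSDE : ∀ x (t : ℝ), 0 ≤ t → ∀ ω,
      Y x t ω = x + (-(∫ s in Set.Ioc (0 : ℝ) t, B (Y x s ω))) + W t ω) :
    ∃ C : ℝ, 0 < C ∧ ∀ t ∈ Set.Icc (0 : ℝ) T, ∀ f : (Fin d → ℝ) → ℝ,
      MemLp f 2 (volume : Measure (Fin d → ℝ)) →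
      eLpNorm (feynmanKac d Y B t f) 2 (volume : Measure (Fin d → ℝ)) ≤
        ENNReal.ofReal C * eLpNorm f 2 (volume : Measure (Fin d → ℝ)) :=
  feynmanKac_L2_bounded_general d T B hB CB hBderbd W Y hYjm hSDE
end

section
/- Let u : [0,T] → X be continuous into a Banach space X, let A be a densely defined closed operator generating a strongly continuous semigroup (Q_t) of bounded operators on X, and let f ∈ L¹([0,T], X). If u is a weak solution of u'(t) = A u(t) + f(t) with u(0) = x ∈ D(A), then u(t) = Q_t x + ∫_0^t Q_{t-s} f(s) ds for all t ∈ [0,T]. In particular the weak solution is unique. -/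
/-!
Let `F t = ∫₀ᵗ u`. Pairing the weak formulation with the graph `{(v, w) | v ∘ A = w on D(A)}` of
`A*` gives `w (F t) = v (u t - x₀ - ∫₀ᵗ f)`; as `A` is closed, Hahn–Banach turns this into
`F t ∈ D(A)` and `A (F t) = u t - x₀ - ∫₀ᵗ f`. So `F` is a strong solution of
`F' = A F + x₀ + ∫₀ˢ f`, and differentiating `s ↦ Q (t - s) (F s)` yields
`F t = ∫₀ᵗ Q (t - s) (x₀ + ∫₀ˢ f) ds = ∫₀ᵗ Q σ x₀ dσ + ∫₀ᵗ ∫₀^{t-ρ} Q σ (f ρ) dσ dρ` (Fubini).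
On the right-hand side `A` is the right derivative of `h ↦ Q h` at `0`, which passes under the
integral by dominated convergence; comparing the two expressions for `A (F t)` gives the formula.
-/

open MeasureTheory Set Filter Topology

section Separation

variable {𝕜 X Y : Type*} [RCLike 𝕜] [NormedAddCommGroup X] [NormedSpace 𝕜 X]

theorem Submodule.mem_of_forall_dual_eq_zero {M : Submodule 𝕜 X} (hM : IsClosed (M : Set X))
    {z : X} (h : ∀ φ : StrongDual 𝕜 X, (∀ m ∈ M, φ m = 0) → φ z = 0) : z ∈ M := by
  -- the instance that makes `X ⧸ M` a normed space
  have : IsClosed (M : Set X) := hM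
  by_contra hz
  obtain ⟨g, hg⟩ := SeparatingDual.exists_ne_zero (R := 𝕜)
    (x := Submodule.Quotient.mk (p := M) z) (by simpa using hz)
  exact hg (h (g.comp M.mkQL) fun m hm => by simp [(Submodule.Quotient.mk_eq_zero M).2 hm])

variable [NormedAddCommGroup Y] [NormedSpace 𝕜 Y]

theorem exists_mem_domain_of_forall_dual (D : Submodule 𝕜 X) (A : D →ₗ[𝕜] Y)
    (hA : IsClosed {p : X × Y | ∃ h : p.1 ∈ D, A ⟨p.1, h⟩ = p.2}) {a : X} {b : Y}
    (h : ∀ (v : StrongDual 𝕜 Y) (w : StrongDual 𝕜 X), (∀ y : D, v (A y) = w y) → w a = v b) :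
    ∃ ha : a ∈ D, A ⟨a, ha⟩ = b := by
  let G : Submodule 𝕜 (X × Y) := (⟨D, A⟩ : X →ₗ.[𝕜] Y).graph
  have hG : (G : Set (X × Y)) = {p | ∃ h : p.1 ∈ D, A ⟨p.1, h⟩ = p.2} := by
    ext ⟨x, y⟩
    simp [G, LinearPMap.mem_graph_iff]
  suffices (a, b) ∈ G by rwa [← SetLike.mem_coe, hG] at this
  refine Submodule.mem_of_forall_dual_eq_zero (hG ▸ hA) fun φ hφ => ?_
  have hvw : ∀ y : D, φ.comp (.inr 𝕜 X Y) (A y) = (-φ.comp (.inl 𝕜 X Y)) y := fun y => by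
    have := hφ (y, A y) ((⟨D, A⟩ : X →ₗ.[𝕜] Y).mem_graph y)
    rw [← φ.comp_inl_add_comp_inr] at this
    rw [neg_apply]
    exact eq_neg_of_add_eq_zero_right this
  rw [← φ.comp_inl_add_comp_inr, ← h _ _ hvw]
  simp

end Separation

theorem exists_mem_domain_integral_of_weak {X : Type*} [NormedAddCommGroup X] [NormedSpace ℝ X]
    [CompleteSpace X] {D : Submodule ℝ X} {A : D →ₗ[ℝ] X}
    (hA : IsClosed {p : X × X | ∃ h : p.1 ∈ D, A ⟨p.1, h⟩ = p.2}) {u f : ℝ → X} {x₀ : X} {t : ℝ}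
    (hu : IntegrableOn u (Ioc 0 t)) (hf : IntegrableOn f (Ioc 0 t))
    (hweak : ∀ v w : StrongDual ℝ X, (∀ y : D, v (A y) = w y) →
      v (u t) = v x₀ + ∫ s in Ioc 0 t, (w (u s) + v (f s))) :
    ∃ h : (∫ s in Ioc 0 t, u s) ∈ D, A ⟨_, h⟩ = u t - x₀ - ∫ s in Ioc 0 t, f s := by
  refine exists_mem_domain_of_forall_dual D A hA fun v w hvw => ?_
  rw [map_sub, map_sub, hweak v w hvw, integral_add (w.integrable_comp hu) (v.integrable_comp hf),
    w.integral_comp_comm hu, v.integral_comp_comm hf]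
  ring

section StrongContinuity

variable {α 𝕜 E F : Type*} [TopologicalSpace α] [RCLike 𝕜] [NormedAddCommGroup E]
  [NormedSpace 𝕜 E] [CompleteSpace E] [NormedAddCommGroup F] [NormedSpace 𝕜 F]

theorem IsCompact.exists_forall_opNorm_le {K : Set α} (hK : IsCompact K) {Q : α → E →L[𝕜] F}
    (hQ : ∀ y, ContinuousOn (fun a => Q a y) K) : ∃ M, ∀ a ∈ K, ‖Q a‖ ≤ M := by
  obtain ⟨M, hM⟩ := banach_steinhaus (g := fun a : K => Q a) fun y => by
    obtain ⟨C, hC⟩ := hK.exists_bound_of_continuousOn (hQ y)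
    exact ⟨C, fun a => hC a a.2⟩
  exact ⟨M, fun a ha => hM ⟨a, ha⟩⟩

theorem continuous_apply_of_continuous_apply [LocallyCompactSpace α] {Q : α → E →L[𝕜] F}
    (hQ : ∀ y, Continuous fun a => Q a y) : Continuous fun p : α × E => Q p.1 p.2 := by
  rw [continuous_iff_continuousAt]
  rintro ⟨a₀, y₀⟩
  obtain ⟨K, hKc, hK⟩ := exists_compact_mem_nhds a₀
  obtain ⟨M, hM⟩ := hKc.exists_forall_opNorm_le fun y => (hQ y).continuousOn
  have hsmall : Tendsto (fun p : α × E => Q p.1 (p.2 - y₀)) (𝓝 (a₀, y₀)) (𝓝 0) := by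
    refine squeeze_zero_norm' ?_ (by simpa using
      ((continuous_snd.sub (continuous_const (y := y₀))).norm.const_mul M).tendsto (a₀, y₀))
    filter_upwards [prod_mem_nhds hK univ_mem] with p hp
    exact (Q p.1).le_of_opNorm_le (hM _ hp.1) _
  show Tendsto _ _ (𝓝 (Q a₀ y₀))
  simpa using hsmall.add (((hQ y₀).tendsto a₀).comp continuousAt_fst)

end StrongContinuity

section Integrals

variable {E F : Type*} [NormedAddCommGroup E] [NormedSpace ℝ E] [NormedAddCommGroup F]
  [NormedSpace ℝ F]

theorem integral_Ioc_integral_Ioc_swap {g : ℝ → ℝ → F} {a b : ℝ}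
    (hg : Integrable (Function.uncurry g)
      ((volume.restrict (Ioc a b)).prod (volume.restrict (Ioc a b)))) :
    ∫ r in Ioc a b, ∫ ρ in Ioc a r, g r ρ = ∫ ρ in Ioc a b, ∫ r in Icc ρ b, g r ρ := by
  have hinner : ∀ r ∈ Ioc a b,
      ∫ ρ in Ioc a r, g r ρ = ∫ ρ in Ioc a b, (Iic r).indicator (g r) ρ := fun r hr => by
    rw [integral_indicator measurableSet_Iic, Measure.restrict_restrict measurableSet_Iic,
      Iic_inter_Ioc_of_le hr.2]
  have houter : ∀ ρ ∈ Ioc a b,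
      ∫ r in Icc ρ b, g r ρ = ∫ r in Ioc a b, (Ici ρ).indicator (g · ρ) r := fun ρ hρ => by
    have hset : Ici ρ ∩ Ioc a b = Icc ρ b := by
      ext r
      simp only [mem_inter_iff, mem_Ici, mem_Ioc, mem_Icc]
      exact ⟨fun h => ⟨h.1, h.2.2⟩, fun h => ⟨h.1, hρ.1.trans_le h.1, h.2⟩⟩
    rw [integral_indicator measurableSet_Ici, Measure.restrict_restrict measurableSet_Ici, hset]
  rw [setIntegral_congr_fun measurableSet_Ioc hinner,
    setIntegral_congr_fun measurableSet_Ioc houter]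
  refine integral_integral_swap ?_
  have htri : Function.uncurry (fun r ρ => (Iic r).indicator (g r) ρ)
      = {p : ℝ × ℝ | p.2 ≤ p.1}.indicator (Function.uncurry g) := by
    ext ⟨r, ρ⟩
    by_cases h : ρ ≤ r <;> simp [h]
  rw [htri]
  exact hg.indicator (measurableSet_le measurable_snd measurable_fst)

theorem integral_apply_setIntegral_Ioc_eq [CompleteSpace E] [CompleteSpace F] {K : ℝ → E →L[ℝ] F}
    (hK : Continuous fun p : ℝ × E => K p.1 p.2) {f : ℝ → E} {t : ℝ} (ht : 0 ≤ t)
    (hf : IntegrableOn f (Ioc 0 t)) :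
    ∫ r in 0..t, K (t - r) (∫ ρ in Ioc 0 r, f ρ) = ∫ ρ in Ioc 0 t, ∫ σ in 0..t - ρ, K σ (f ρ) := by
  obtain ⟨M, hM⟩ := isCompact_Icc.exists_forall_opNorm_le (K := Icc 0 t) (Q := K)
    fun y => (hK.comp (continuous_id.prodMk (continuous_const (y := y)))).continuousOn
  have hint : Integrable (Function.uncurry fun r ρ => K (t - r) (f ρ))
      ((volume.restrict (Ioc 0 t)).prod (volume.restrict (Ioc 0 t))) := by
    refine ((hf.norm.const_mul M).comp_snd _).mono' (hK.comp_aestronglyMeasurable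
      ((continuous_const.sub continuous_fst).aestronglyMeasurable.prodMk
        hf.aestronglyMeasurable.comp_snd)) ?_
    rw [Measure.prod_restrict]
    filter_upwards [ae_restrict_mem (measurableSet_Ioc.prod measurableSet_Ioc)] with p hp
    exact (K _).le_of_opNorm_le (hM _ ⟨by linarith [hp.1.2], by linarith [hp.1.1]⟩) _
  rw [intervalIntegral.integral_of_le ht]
  calc ∫ r in Ioc 0 t, K (t - r) (∫ ρ in Ioc 0 r, f ρ)
      = ∫ r in Ioc 0 t, ∫ ρ in Ioc 0 r, K (t - r) (f ρ) :=
        setIntegral_congr_fun measurableSet_Ioc fun r hr =>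
          ((K _).integral_comp_comm (hf.mono_set (Ioc_subset_Ioc_right hr.2))).symm
    _ = ∫ ρ in Ioc 0 t, ∫ r in Icc ρ t, K (t - r) (f ρ) := integral_Ioc_integral_Ioc_swap hint
    _ = ∫ ρ in Ioc 0 t, ∫ σ in 0..t - ρ, K σ (f ρ) :=
        setIntegral_congr_fun measurableSet_Ioc fun ρ hρ => by
          rw [integral_Icc_eq_integral_Ioc, ← intervalIntegral.integral_of_le hρ.2,
            intervalIntegral.integral_comp_sub_left (fun σ => K σ (f ρ)), sub_self]

theorem hasDerivAt_setIntegral_Ioc [CompleteSpace F] {u : ℝ → F} {a b s : ℝ}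
    (hu : ContinuousOn u (Icc a b)) (hs : s ∈ Ioo a b) :
    HasDerivAt (fun x => ∫ r in Ioc a x, u r) (u s) s := by
  have hint : IntervalIntegrable u volume a s :=
    (hu.mono (Icc_subset_Icc_right hs.2.le)).intervalIntegrable_of_Icc hs.1.le
  refine (intervalIntegral.integral_hasDerivAt_right hint
    ((hu.mono Ioo_subset_Icc_self).stronglyMeasurableAtFilter isOpen_Ioo s hs)
    (hu.continuousAt (Icc_mem_nhds hs.1 hs.2))).congr_of_eventuallyEq ?_
  filter_upwards [Ioi_mem_nhds hs.1] with x hx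
  exact (intervalIntegral.integral_of_le hx.le).symm

theorem norm_integral_apply_le [CompleteSpace F] {Q : ℝ → E →L[ℝ] F} {a M b h : ℝ}
    (hM : ∀ σ ∈ Icc 0 a, ‖Q σ‖ ≤ M) (hb : 0 ≤ b) (hh : 0 ≤ h) (hba : b + h ≤ a) (y : E) :
    ‖∫ σ in b..b + h, Q σ y‖ ≤ M * ‖y‖ * h := by
  have := intervalIntegral.norm_integral_le_of_norm_le_const (a := b) (b := b + h)
    (C := M * ‖y‖) (f := fun σ => Q σ y) fun σ hσ => by
      rw [uIoc_of_le (by linarith)] at hσ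
      exact (Q σ).le_of_opNorm_le (hM σ ⟨by linarith [hσ.1], by linarith [hσ.2]⟩) y
  rwa [add_sub_cancel_left, abs_of_nonneg hh] at this

end Integrals

section Semigroup

variable {X : Type*} [NormedAddCommGroup X] [NormedSpace ℝ X]

-- Strong continuity is required on all of `ℝ`: see `of_continuousOn` for the extension of a
-- semigroup on `[0, ∞)` by `Q t = Q 0` for `t < 0`.
structure IsC0Semigroup (Q : ℝ → X →L[ℝ] X) : Prop where
  zero_eq_id : Q 0 = ContinuousLinearMap.id ℝ X
  add_eq_comp : ∀ s t : ℝ, 0 ≤ s → 0 ≤ t → Q (s + t) = (Q s).comp (Q t)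
  continuous_apply : ∀ y : X, Continuous fun t => Q t y

namespace IsC0Semigroup

theorem of_continuousOn {Q : ℝ → X →L[ℝ] X} (h0 : Q 0 = ContinuousLinearMap.id ℝ X)
    (hadd : ∀ s t : ℝ, 0 ≤ s → 0 ≤ t → Q (s + t) = (Q s).comp (Q t))
    (hcont : ∀ y : X, ContinuousOn (fun t => Q t y) (Ici 0)) :
    IsC0Semigroup fun t => Q (max t 0) where
  zero_eq_id := by simpa using h0
  add_eq_comp s t hs ht := by simpa [hs, ht, add_nonneg hs ht] using hadd s t hs ht
  continuous_apply y :=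
    (hcont y).comp_continuous (continuous_id.max continuous_const) fun t => le_max_right t 0

variable {Q : ℝ → X →L[ℝ] X}

theorem apply_apply (hQ : IsC0Semigroup Q) {s t : ℝ} (hs : 0 ≤ s) (ht : 0 ≤ t) (y : X) :
    Q s (Q t y) = Q (s + t) y := by
  rw [hQ.add_eq_comp s t hs ht, ContinuousLinearMap.comp_apply]

variable [CompleteSpace X]

theorem apply_integral_sub_integral (hQ : IsC0Semigroup Q) {τ h : ℝ} (hτ : 0 ≤ τ) (hh : 0 ≤ h)
    (y : X) : Q h (∫ σ in 0..τ, Q σ y) - ∫ σ in 0..τ, Q σ y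
      = (∫ σ in τ..τ + h, Q σ y) - ∫ σ in 0..h, Q σ y := by
  have hint (a b : ℝ) : IntervalIntegrable (fun σ => Q σ y) volume a b :=
    (hQ.continuous_apply y).intervalIntegrable a b
  have hshift : Q h (∫ σ in 0..τ, Q σ y) = ∫ σ in h..τ + h, Q σ y := by
    rw [← (Q h).intervalIntegral_comp_comm (hint 0 τ),
      intervalIntegral.integral_congr (g := fun σ => Q (σ + h) y) fun σ hσ => by
        rw [hQ.apply_apply hh (by simpa [hτ] using hσ.1), add_comm],
      intervalIntegral.integral_comp_add_right (fun σ => Q σ y), zero_add]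
  rw [hshift, ← intervalIntegral.integral_add_adjacent_intervals (hint 0 h) (hint h τ),
    ← intervalIntegral.integral_add_adjacent_intervals (hint h τ) (hint τ (τ + h))]
  abel

theorem tendsto_slope_integral (hQ : IsC0Semigroup Q) {τ : ℝ} (hτ : 0 ≤ τ) (y : X) :
    Tendsto (fun h => h⁻¹ • (Q h (∫ σ in 0..τ, Q σ y) - ∫ σ in 0..τ, Q σ y)) (𝓝[>] 0)
      (𝓝 (Q τ y - y)) := by
  have havg (a : ℝ) : Tendsto (fun h => h⁻¹ • ∫ σ in a..a + h, Q σ y) (𝓝[>] 0) (𝓝 (Q a y)) := by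
    simpa using
      ((hQ.continuous_apply y).integral_hasStrictDerivAt a a).hasDerivAt.tendsto_slope_zero_right
  have hlim := (havg τ).sub (havg 0)
  rw [hQ.zero_eq_id, ContinuousLinearMap.id_apply] at hlim
  refine hlim.congr' ?_
  filter_upwards [self_mem_nhdsWithin] with h hh
  rw [hQ.apply_integral_sub_integral hτ (le_of_lt hh), smul_sub, zero_add]

theorem norm_slope_integral_le (hQ : IsC0Semigroup Q) {a M τ h : ℝ}
    (hM : ∀ σ ∈ Icc 0 a, ‖Q σ‖ ≤ M) (hτ : 0 ≤ τ) (hh : 0 < h) (hτh : τ + h ≤ a) (y : X) :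
    ‖h⁻¹ • (Q h (∫ σ in 0..τ, Q σ y) - ∫ σ in 0..τ, Q σ y)‖ ≤ 2 * M * ‖y‖ := by
  have h₁ := norm_integral_apply_le hM hτ hh.le hτh y
  have h₂ := norm_integral_apply_le hM le_rfl hh.le (by linarith) y
  rw [zero_add] at h₂
  rw [hQ.apply_integral_sub_integral hτ hh.le, norm_smul, norm_inv, Real.norm_of_nonneg hh.le]
  calc h⁻¹ * ‖(∫ σ in τ..τ + h, Q σ y) - ∫ σ in 0..h, Q σ y‖
      ≤ h⁻¹ * (2 * M * ‖y‖ * h) := by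
        gcongr
        linarith [norm_sub_le (∫ σ in τ..τ + h, Q σ y) (∫ σ in 0..h, Q σ y)]
    _ = 2 * M * ‖y‖ := by field_simp

theorem continuous_uncurry (hQ : IsC0Semigroup Q) : Continuous fun p : ℝ × X => Q p.1 p.2 :=
  continuous_apply_of_continuous_apply hQ.continuous_apply

theorem continuous_integral_apply (hQ : IsC0Semigroup Q) :
    Continuous fun p : ℝ × X => ∫ σ in 0..p.1, Q σ p.2 :=
  intervalIntegral.continuous_parametric_intervalIntegral_of_continuous
    (f := fun (p : ℝ × X) (σ : ℝ) => Q σ p.2)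
    (hQ.continuous_uncurry.comp (continuous_snd.prodMk (continuous_snd.comp continuous_fst)))
    continuous_fst

theorem exists_forall_opNorm_le (hQ : IsC0Semigroup Q) (a : ℝ) :
    ∃ M, ∀ σ ∈ Icc 0 a, ‖Q σ‖ ≤ M :=
  isCompact_Icc.exists_forall_opNorm_le fun y => (hQ.continuous_apply y).continuousOn

theorem tendsto_integral_slope_integral (hQ : IsC0Semigroup Q) {f : ℝ → X} {t : ℝ}
    (hf : IntegrableOn f (Ioc 0 t)) :
    Tendsto (fun h => ∫ ρ in Ioc 0 t,
        h⁻¹ • (Q h (∫ σ in 0..t - ρ, Q σ (f ρ)) - ∫ σ in 0..t - ρ, Q σ (f ρ))) (𝓝[>] 0)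
      (𝓝 (∫ ρ in Ioc 0 t, (Q (t - ρ) (f ρ) - f ρ))) := by
  obtain ⟨M, hM⟩ := hQ.exists_forall_opNorm_le (t + 1)
  refine tendsto_integral_filter_of_dominated_convergence (fun ρ => 2 * M * ‖f ρ‖) ?_ ?_
    (hf.norm.const_mul _) ?_
  · refine Eventually.of_forall fun h => ?_
    have hS := hQ.continuous_integral_apply
    have hg : Continuous fun p : ℝ × X =>
        h⁻¹ • (Q h (∫ σ in 0..p.1, Q σ p.2) - ∫ σ in 0..p.1, Q σ p.2) :=
      (((Q h).continuous.comp hS).sub hS).const_smul h⁻¹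
    have hφ : AEStronglyMeasurable (fun ρ => (t - ρ, f ρ)) (volume.restrict (Ioc 0 t)) :=
      (continuous_sub_left t).aestronglyMeasurable.prodMk hf.aestronglyMeasurable
    simpa only using hg.comp_aestronglyMeasurable hφ
  · filter_upwards [Ioo_mem_nhdsGT zero_lt_one] with h hh
    filter_upwards [ae_restrict_mem measurableSet_Ioc] with ρ hρ
    exact hQ.norm_slope_integral_le hM (by linarith [hρ.2]) hh.1 (by linarith [hρ.1, hh.2]) _
  · filter_upwards [ae_restrict_mem measurableSet_Ioc] with ρ hρ
    exact hQ.tendsto_slope_integral (by linarith [hρ.2]) _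

variable {D : Submodule ℝ X} {A : D →ₗ[ℝ] X}

theorem hasDerivWithinAt_apply_sub (hQ : IsC0Semigroup Q)
    (hgen : ∀ y : D, Tendsto (fun h : ℝ => h⁻¹ • (Q h y - y)) (𝓝[>] 0) (𝓝 (A y)))
    {F : ℝ → X} {F' : X} {s t : ℝ} (hst : s < t) (hF : HasDerivWithinAt F F' (Ioi s) s)
    (hD : F s ∈ D) :
    HasDerivWithinAt (fun r => Q (t - r) (F r)) (Q (t - s) (F' - A ⟨F s, hD⟩)) (Ioi s) s := by
  rw [hasDerivWithinAt_iff_tendsto_slope' self_notMem_Ioi] at hF ⊢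
  have hshift : Tendsto (fun r => r - s) (𝓝[>] s) (𝓝[>] 0) :=
    tendsto_nhdsWithin_of_tendsto_nhds_of_eventually_within _
      (by simpa using ((continuous_sub_right s).tendsto s).mono_left nhdsWithin_le_nhds)
      (eventually_nhdsWithin_of_forall fun r hr => mem_Ioi.2 (sub_pos.2 hr))
  have happly {z : ℝ → X} {z₀ : X} (hz : Tendsto z (𝓝[>] s) (𝓝 z₀)) :
      Tendsto (fun r => Q (t - r) (z r)) (𝓝[>] s) (𝓝 (Q (t - s) z₀)) :=
    (hQ.continuous_uncurry.tendsto _).comp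
      ((((continuous_sub_left t).tendsto s).mono_left nhdsWithin_le_nhds).prodMk_nhds hz)
  rw [map_sub]
  refine ((happly hF).sub (happly ((hgen ⟨F s, hD⟩).comp hshift))).congr' ?_
  filter_upwards [Ioo_mem_nhdsGT hst] with r hr
  have hsemi : Q (t - r) (Q (r - s) (F s)) = Q (t - s) (F s) := by
    rw [hQ.apply_apply (by linarith [hr.2]) (by linarith [hr.1])]
    ring_nf
  simp only [Function.comp_def, slope_def_module, map_smul, map_sub, hsemi]
  rw [← smul_sub]
  congr 1
  abel

theorem eq_apply_add_integral_of_hasDerivWithinAt (hQ : IsC0Semigroup Q)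
    (hgen : ∀ y : D, Tendsto (fun h : ℝ => h⁻¹ • (Q h y - y)) (𝓝[>] 0) (𝓝 (A y)))
    {F F' g : ℝ → X} {t : ℝ} (ht : 0 ≤ t) (hF : ContinuousOn F (Icc 0 t))
    (hg : ContinuousOn g (Icc 0 t)) (hF' : ∀ s ∈ Ioo 0 t, HasDerivWithinAt F (F' s) (Ioi s) s)
    (hA : ∀ s ∈ Ioo 0 t, ∃ h : F s ∈ D, A ⟨F s, h⟩ = F' s - g s) :
    F t = Q t (F 0) + ∫ s in 0..t, Q (t - s) (g s) := by
  have hcomp {φ : ℝ → X} (hφ : ContinuousOn φ (Icc 0 t)) :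
      ContinuousOn (fun s => Q (t - s) (φ s)) (Icc 0 t) :=
    hQ.continuous_uncurry.comp_continuousOn ((continuous_sub_left t).continuousOn.prodMk hφ)
  rw [intervalIntegral.integral_eq_sub_of_hasDeriv_right_of_le ht (hcomp hF) (fun s hs => ?_)
    ((hcomp hg).intervalIntegrable_of_Icc ht), sub_self, hQ.zero_eq_id,
    ContinuousLinearMap.id_apply, sub_zero]
  · abel
  · obtain ⟨hD, hAs⟩ := hA s hs
    simpa [hAs] using hQ.hasDerivWithinAt_apply_sub hgen hs.2 (hF' s hs) hD

theorem generator_apply_eq (hQ : IsC0Semigroup Q)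
    (hgen : ∀ y : D, Tendsto (fun h : ℝ => h⁻¹ • (Q h y - y)) (𝓝[>] 0) (𝓝 (A y)))
    {f : ℝ → X} {t : ℝ} (ht : 0 ≤ t) (hf : IntegrableOn f (Ioc 0 t)) (x₀ : X) {z : X} (hz : z ∈ D)
    (hz_eq : z = (∫ σ in 0..t, Q σ x₀) + ∫ ρ in Ioc 0 t, ∫ σ in 0..t - ρ, Q σ (f ρ)) :
    A ⟨z, hz⟩ = Q t x₀ - x₀ + ∫ ρ in Ioc 0 t, (Q (t - ρ) (f ρ) - f ρ) := by
  obtain ⟨M, hM⟩ := hQ.exists_forall_opNorm_le t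
  have hint : Integrable (fun ρ => ∫ σ in 0..t - ρ, Q σ (f ρ)) (volume.restrict (Ioc 0 t)) := by
    refine (hf.norm.const_mul (M * t)).mono' ?_ ?_
    · simpa only using hQ.continuous_integral_apply.comp_aestronglyMeasurable
        ((continuous_sub_left t).aestronglyMeasurable.prodMk hf.aestronglyMeasurable)
    · have hM0 : 0 ≤ M := (norm_nonneg _).trans (hM 0 ⟨le_rfl, ht⟩)
      filter_upwards [ae_restrict_mem measurableSet_Ioc] with ρ hρ
      have hρt : 0 ≤ t - ρ := by linarith [hρ.2]
      have := norm_integral_apply_le hM le_rfl hρt (by linarith [hρ.1]) (f ρ)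
      rw [zero_add] at this
      nlinarith [mul_nonneg hM0 (norm_nonneg (f ρ)), hρ.1]
  subst hz_eq
  refine tendsto_nhds_unique (hgen ⟨_, hz⟩) ?_
  refine ((hQ.tendsto_slope_integral ht x₀).add (hQ.tendsto_integral_slope_integral hf)).congr
    fun h => ?_
  dsimp only
  rw [map_add, ← (Q h).integral_comp_comm hint, integral_smul,
    integral_sub ((Q h).integrable_comp hint) hint, ← smul_add]
  congr 1
  abel

theorem integrableOn_apply_sub (hQ : IsC0Semigroup Q) {f : ℝ → X} {t : ℝ}
    (hf : IntegrableOn f (Ioc 0 t)) : IntegrableOn (fun ρ => Q (t - ρ) (f ρ)) (Ioc 0 t) := by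
  obtain ⟨M, hM⟩ := hQ.exists_forall_opNorm_le t
  refine (hf.norm.const_mul M).mono' ?_ ?_
  · simpa only using hQ.continuous_uncurry.comp_aestronglyMeasurable
      ((continuous_sub_left t).aestronglyMeasurable.prodMk hf.aestronglyMeasurable)
  · filter_upwards [ae_restrict_mem measurableSet_Ioc] with ρ hρ
    exact (Q _).le_of_opNorm_le (hM _ ⟨by linarith [hρ.2], by linarith [hρ.1]⟩) _

theorem setIntegral_eq_of_forall_mem_domain (hQ : IsC0Semigroup Q)
    (hgen : ∀ y : D, Tendsto (fun h : ℝ => h⁻¹ • (Q h y - y)) (𝓝[>] 0) (𝓝 (A y)))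
    {u f : ℝ → X} {x₀ : X} {t : ℝ} (ht : 0 ≤ t) (hu : ContinuousOn u (Icc 0 t))
    (hf : IntegrableOn f (Ioc 0 t))
    (hdom : ∀ s ∈ Ioo 0 t, ∃ h : (∫ r in Ioc 0 s, u r) ∈ D,
      A ⟨_, h⟩ = u s - x₀ - ∫ r in Ioc 0 s, f r) :
    ∫ s in Ioc 0 t, u s = (∫ σ in 0..t, Q σ x₀) + ∫ ρ in Ioc 0 t, ∫ σ in 0..t - ρ, Q σ (f ρ) := by
  have hprim : ContinuousOn (fun s => ∫ r in Ioc 0 s, f r) (Icc 0 t) :=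
    intervalIntegral.continuousOn_primitive
      (by rw [integrableOn_Icc_iff_integrableOn_Ioc]; exact hf)
  rw [hQ.eq_apply_add_integral_of_hasDerivWithinAt hgen ht
    (intervalIntegral.continuousOn_primitive (hu.integrableOn_compact isCompact_Icc))
    (g := fun s => x₀ + ∫ r in Ioc 0 s, f r) (continuousOn_const.add hprim)
    (fun s hs => (hasDerivAt_setIntegral_Ioc hu hs).hasDerivWithinAt)
    (fun s hs => by simpa only [sub_sub] using hdom s hs)]
  have hshift : ∫ s in 0..t, Q (t - s) x₀ = ∫ σ in 0..t, Q σ x₀ := by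
    simpa using intervalIntegral.integral_comp_sub_left (fun σ => Q σ x₀) t (a := 0) (b := t)
  simp only [Ioc_self, Measure.restrict_empty, integral_zero_measure, map_zero, zero_add, map_add]
  rw [intervalIntegral.integral_add (f := fun s => Q (t - s) x₀)
    (g := fun s => Q (t - s) (∫ r in Ioc 0 s, f r))
    (((hQ.continuous_apply x₀).comp (continuous_sub_left t)).intervalIntegrable 0 t)
    ((hQ.continuous_uncurry.comp_continuousOn
      ((continuous_sub_left t).continuousOn.prodMk hprim)).intervalIntegrable_of_Icc ht),
    hshift, integral_apply_setIntegral_Ioc_eq hQ.continuous_uncurry ht hf]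

theorem eq_mild_of_weak (hQ : IsC0Semigroup Q)
    (hA : IsClosed {p : X × X | ∃ h : p.1 ∈ D, A ⟨p.1, h⟩ = p.2})
    (hgen : ∀ y : D, Tendsto (fun h : ℝ => h⁻¹ • (Q h y - y)) (𝓝[>] 0) (𝓝 (A y)))
    {T : ℝ} {f u : ℝ → X} (hf : IntegrableOn f (Ioc 0 T)) (hu : ContinuousOn u (Icc 0 T))
    {x₀ : X} (hweak : ∀ v w : StrongDual ℝ X, (∀ y : D, v (A y) = w y) → ∀ t ∈ Icc 0 T,
      v (u t) = v x₀ + ∫ s in Ioc 0 t, (w (u s) + v (f s))) :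
    ∀ t ∈ Icc 0 T, u t = Q t x₀ + ∫ s in Ioc 0 t, Q (t - s) (f s) := by
  rintro t ⟨ht, htT⟩
  have hut : ContinuousOn u (Icc 0 t) := hu.mono (Icc_subset_Icc_right htT)
  have hft (s : ℝ) (hs : s ≤ t) : IntegrableOn f (Ioc 0 s) :=
    hf.mono_set (Ioc_subset_Ioc_right (hs.trans htT))
  have hdom (s : ℝ) (hs : s ∈ Icc 0 t) :=
    exists_mem_domain_integral_of_weak hA ((hut.integrableOn_compact isCompact_Icc).mono_set
      (Ioc_subset_Icc_self.trans (Icc_subset_Icc_right hs.2))) (hft s hs.2)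
      fun v w hvw => hweak v w hvw s ⟨hs.1, hs.2.trans htT⟩
  obtain ⟨hD, hAu⟩ := hdom t ⟨ht, le_rfl⟩
  have hAz := hQ.generator_apply_eq hgen ht (hft t le_rfl) x₀ hD
    (hQ.setIntegral_eq_of_forall_mem_domain hgen ht hut (hft t le_rfl)
      fun s hs => hdom s (Ioo_subset_Icc_self hs))
  rw [hAu, integral_sub (hQ.integrableOn_apply_sub (hft t le_rfl)) (hft t le_rfl)] at hAz
  linear_combination (norm := module) hAz

end IsC0Semigroup

end Semigroup

theorem ball_weak_solution_representation_general
    {X : Type*} [NormedAddCommGroup X] [NormedSpace ℝ X] [CompleteSpace X]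
    (T : ℝ)
    (D : Submodule ℝ X)
    (A : D →ₗ[ℝ] X)
    (hclosed : IsClosed {p : X × X | ∃ h : p.1 ∈ D, A ⟨p.1, h⟩ = p.2})
    (Q : ℝ → X →L[ℝ] X)
    (hQ0 : Q 0 = ContinuousLinearMap.id ℝ X)
    (hQsem : ∀ s t : ℝ, 0 ≤ s → 0 ≤ t → Q (s + t) = (Q s).comp (Q t))
    (hQcont : ∀ y : X, ContinuousOn (fun t => Q t y) (Set.Ici 0))
    (hgen : ∀ y : D, Filter.Tendsto (fun t : ℝ => t⁻¹ • (Q t (y : X) - (y : X)))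
      (nhdsWithin 0 (Set.Ioi 0)) (nhds (A y)))
    (f : ℝ → X) (hf : IntegrableOn f (Set.Ioc 0 T))
    (u : ℝ → X) (hu : ContinuousOn u (Set.Icc 0 T))
    (x₀ : X)
    (hweak : ∀ v w : StrongDual ℝ X,
      (∀ y : D, v (A y) = w (y : X)) →
      ∀ t ∈ Set.Icc (0 : ℝ) T,
        v (u t) = v x₀ + ∫ s in Set.Ioc (0 : ℝ) t, (w (u s) + v (f s))) :
    ∀ t ∈ Set.Icc (0 : ℝ) T,
      u t = Q t x₀ + ∫ s in Set.Ioc (0 : ℝ) t, Q (t - s) (f s) := by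
  have hQ := IsC0Semigroup.of_continuousOn hQ0 hQsem hQcont
  have hgen' (y : D) : Tendsto (fun h : ℝ => h⁻¹ • (Q (max h 0) y - y)) (𝓝[>] 0) (𝓝 (A y)) :=
    (hgen y).congr' (eventually_nhdsWithin_of_forall fun h hh => by
      simp only [max_eq_left (mem_Ioi.1 hh).le])
  intro t ht
  rw [hQ.eq_mild_of_weak hclosed hgen' hf hu hweak t ht, max_eq_left ht.1]
  congr 1
  exact setIntegral_congr_fun measurableSet_Ioc fun s hs => by
    rw [max_eq_left (sub_nonneg.2 hs.2)]

/-- Ball's theorem: let `A` be a densely defined closed operator on a Banach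
space `X` generating a strongly continuous semigroup `(Q_t)` of bounded
operators, let `f ∈ L¹([0,T], X)`, and let `u ∈ C([0,T], X)` be a weak solution
of `u' = A u + f`, `u(0) = x₀ ∈ D(A)` (weak solution: for every `v ∈ D(A*)`,
`⟨u(t), v⟩ = ⟨x₀, v⟩ + ∫_0^t (⟨u(s), A*v⟩ + ⟨f(s), v⟩) ds`).  Then
`u(t) = Q_t x₀ + ∫_0^t Q_{t-s} f(s) ds` for all `t ∈ [0,T]`; in particular the
weak solution is unique. -/
theorem ball_weak_solution_representation
    {X : Type*} [NormedAddCommGroup X] [NormedSpace ℝ X] [CompleteSpace X]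
    (T : ℝ) (hT : 0 < T)
    (D : Submodule ℝ X) (hDdense : Dense (D : Set X))
    (A : D →ₗ[ℝ] X)
    (hclosed : IsClosed {p : X × X | ∃ h : p.1 ∈ D, A ⟨p.1, h⟩ = p.2})
    (Q : ℝ → X →L[ℝ] X)
    (hQ0 : Q 0 = ContinuousLinearMap.id ℝ X)
    (hQsem : ∀ s t : ℝ, 0 ≤ s → 0 ≤ t → Q (s + t) = (Q s).comp (Q t))
    (hQcont : ∀ y : X, ContinuousOn (fun t => Q t y) (Set.Ici 0))
    (hgen : ∀ y : D, Filter.Tendsto (fun t : ℝ => t⁻¹ • (Q t (y : X) - (y : X)))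
      (nhdsWithin 0 (Set.Ioi 0)) (nhds (A y)))
    (f : ℝ → X) (hf : IntegrableOn f (Set.Ioc 0 T))
    (u : ℝ → X) (hu : ContinuousOn u (Set.Icc 0 T))
    (x₀ : X) (hx₀ : x₀ ∈ D) (hu0 : u 0 = x₀)
    (hweak : ∀ v w : StrongDual ℝ X,
      (∀ y : D, v (A y) = w (y : X)) →
      ∀ t ∈ Set.Icc (0 : ℝ) T,
        v (u t) = v x₀ + ∫ s in Set.Ioc (0 : ℝ) t, (w (u s) + v (f s))) :
    ∀ t ∈ Set.Icc (0 : ℝ) T,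
      u t = Q t x₀ + ∫ s in Set.Ioc (0 : ℝ) t, Q (t - s) (f s) :=
  ball_weak_solution_representation_general T D A hclosed Q hQ0 hQsem hQcont hgen f hf u hu x₀ hweak
end
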